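/- Let p_sat > 0 be the probability that a formula drawn from D_R(m,n,k) is satisfiable. Let S be any set of satisfiable formulas with exactly m clauses and k literals per clause, and let p_γ ∈ [0,1]. If Pr_{(φ,a) ∼ D_pa(m,n,k)}[φ ∈ S] ≤ p_γ, then Pr_{φ ∼ D_S(m,n,k)}[φ ∈ S] ≤ p_γ · 2^n · e^{−m/2^k} / p_sat. -/

import Mathlib

/-! Every formula in `S` has a satisfying assignment, so `|S|` is at most the number of planted
pairs `(φ, a)` with `φ ∈ S`, which by hypothesis is at most `p_γ` times the number
`2^n ((2n)^k - n^k)^m` of all planted pairs. Since `(2n)^k - n^k = (1 - 2^{-k}) (2n)^k` and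
`1 - x ≤ e^{-x}`, this is at most `p_γ 2^n e^{-m/2^k} (2n)^{km}`; dividing by the number
`p_sat (2n)^{km}` of satisfiable formulas gives the bound. -/

open scoped Classical
open Finset

/-- An assignment of `n` Boolean variables. -/
abbrev Assignment (n : ℕ) := Fin n → Bool

/-- A clause: an ordered `k`-tuple of literals, each a variable index together with a sign. -/
abbrev Clause (n k : ℕ) := Fin k → Fin n × Bool

/-- A formula: an ordered `m`-tuple of clauses. -/
abbrev Formula (n k m : ℕ) := Fin m → Clause n k

/-- An assignment satisfies a clause if it satisfies at least one literal of the clause. -/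
def SatClause {n k : ℕ} (v : Assignment n) (c : Clause n k) : Prop :=
  ∃ i, v (c i).1 = (c i).2

/-- An assignment satisfies a formula if it satisfies every clause. -/
def SatFormula {n k m : ℕ} (v : Assignment n) (φ : Formula n k m) : Prop :=
  ∀ j, SatClause v (φ j)

/-- The number of clauses of `φ` satisfied by `v`. -/
noncomputable def numSat {n k m : ℕ} (φ : Formula n k m) (v : Assignment n) : ℕ :=
  (Finset.univ.filter fun j => SatClause v (φ j)).card

/-- The number of clauses of `φ` left unsatisfied by `v`. -/
noncomputable def numUnsat {n k m : ℕ} (φ : Formula n k m) (v : Assignment n) : ℕ :=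
  (Finset.univ.filter fun j => ¬ SatClause v (φ j)).card


lemma card_clause (n k : ℕ) : Fintype.card (Clause n k) = (2 * n) ^ k := by
  simp [mul_comm]

lemma card_formula (n k m : ℕ) : Fintype.card (Formula n k m) = ((2 * n) ^ k) ^ m := by
  simp [mul_comm]

lemma card_falsifiedLiteral (n : ℕ) (a : Assignment n) :
    Fintype.card {l : Fin n × Bool // a l.1 ≠ l.2} = n := by
  have hexactlyOne :
      ∀ b : Bool, ((if b = true then 0 else 1) + if b = false then 0 else 1) = 1 := by
    decide
  simp [Fintype.card_subtype, card_filter, Fintype.sum_prod_type, hexactlyOne]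

lemma card_not_satClause (n k : ℕ) (a : Assignment n) :
    Fintype.card {c : Clause n k // ¬ SatClause a c} = n ^ k := by
  have hfalsified : ∀ c : Clause n k, ¬ SatClause a c ↔ ∀ i, a (c i).1 ≠ (c i).2 := by
    simp [SatClause]
  rw [Fintype.card_congr ((Equiv.subtypeEquivRight hfalsified).trans
    (Equiv.subtypePiEquivPi (p := fun _ (l : Fin n × Bool) => a l.1 ≠ l.2))), Fintype.card_pi]
  simp only [card_falsifiedLiteral, prod_const, card_univ, Fintype.card_fin]

lemma card_satClause (n k : ℕ) (a : Assignment n) :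
    Fintype.card {c : Clause n k // SatClause a c} = (2 * n) ^ k - n ^ k := by
  have hcompl := Fintype.card_subtype_compl fun c : Clause n k => ¬ SatClause a c
  simp only [not_not] at hcompl
  rw [hcompl, card_clause, card_not_satClause]

lemma card_satFormula (n k m : ℕ) (a : Assignment n) :
    Fintype.card {φ : Formula n k m // SatFormula a φ} = ((2 * n) ^ k - n ^ k) ^ m := by
  calc Fintype.card {φ : Formula n k m // SatFormula a φ}
      = Fintype.card (Fin m → {c : Clause n k // SatClause a c}) :=
        Fintype.card_congr (Equiv.subtypePiEquivPi (p := fun _ c => SatClause a c))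
    _ = _ := by simp [card_satClause]

lemma card_satPairs (n k m : ℕ) :
    #{p : Formula n k m × Assignment n | SatFormula p.2 p.1}
      = 2 ^ n * ((2 * n) ^ k - n ^ k) ^ m := by
  rw [card_filter, Fintype.sum_prod_type, sum_comm]
  simp [← Fintype.card_subtype, card_satFormula]

lemma two_mul_pow_sub_pow_le (x : ℝ) (hx : 0 ≤ x) (k : ℕ) :
    (2 * x) ^ k - x ^ k ≤ Real.exp (-(1 / 2 ^ k)) * (2 * x) ^ k := by
  have hsplit : (2 * x) ^ k - x ^ k = (1 - 1 / 2 ^ k) * (2 * x) ^ k := by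
    field_simp
    ring
  rw [hsplit]
  gcongr
  exact Real.one_sub_le_exp_neg _

lemma card_satPairs_le (n k m : ℕ) :
    (#{p : Formula n k m × Assignment n | SatFormula p.2 p.1} : ℝ)
      ≤ 2 ^ n * Real.exp (-(m : ℝ) / 2 ^ k) * Fintype.card (Formula n k m) := by
  have hle : n ^ k ≤ (2 * n) ^ k := Nat.pow_le_pow_left (by omega) k
  rw [card_satPairs, card_formula]
  push_cast [Nat.cast_sub hle]
  have hexp : Real.exp (-(m : ℝ) / 2 ^ k) = Real.exp (-(1 / 2 ^ k)) ^ m := by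
    rw [← Real.exp_nat_mul]
    ring_nf
  rw [hexp, mul_assoc, ← mul_pow]
  gcongr
  · exact sub_nonneg.2 (by exact_mod_cast hle)
  · exact two_mul_pow_sub_pow_le _ n.cast_nonneg k

lemma card_le_card_pairs_of_forall_exists {α β : Type*} [Fintype α] [Fintype β] [DecidableEq α]
    (R : α → β → Prop) [∀ x y, Decidable (R x y)] (S : Finset α) (hS : ∀ x ∈ S, ∃ y, R x y) :
    #S ≤ #{p : α × β | R p.1 p.2 ∧ p.1 ∈ S} := by
  calc #S ≤ #(image Prod.fst {p : α × β | R p.1 p.2 ∧ p.1 ∈ S}) := card_le_card fun x hx => by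
        obtain ⟨y, hy⟩ := hS x hx
        exact mem_image.2 ⟨(x, y), by simp [hy, hx]⟩
    _ ≤ _ := card_image_le

lemma le_mul_of_div_le_of_le {a b c : ℝ} (hb : 0 ≤ b) (hab : a ≤ b) (h : a / b ≤ c) :
    a ≤ c * b := by
  rcases hb.eq_or_lt with hb | hb
  · subst hb
    simpa using hab
  · exact (div_le_iff₀ hb).1 h

theorem planted_to_satisfiable_general (n k m : ℕ)
    (psat : ℝ)
    (hpsat : psat = (((univ : Finset (Formula n k m)).filter fun φ =>
        ∃ a : Assignment n, SatFormula a φ).card : ℝ) / (Fintype.card (Formula n k m) : ℝ))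
    (S : Finset (Formula n k m)) (hsat : ∀ φ ∈ S, ∃ a : Assignment n, SatFormula a φ)
    (pγ : ℝ) (hpγ0 : 0 ≤ pγ)
    (hplanted :
      ((((univ : Finset (Formula n k m × Assignment n)).filter fun p =>
          SatFormula p.2 p.1 ∧ p.1 ∈ S).card : ℝ)
        / (((univ : Finset (Formula n k m × Assignment n)).filter fun p =>
          SatFormula p.2 p.1).card : ℝ)) ≤ pγ) :
    (S.card : ℝ) / (((univ : Finset (Formula n k m)).filter fun φ =>
        ∃ a : Assignment n, SatFormula a φ).card : ℝ)
      ≤ pγ * 2 ^ n * Real.exp (-(m : ℝ) / 2 ^ k) / psat := by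
  have hS := card_le_card_pairs_of_forall_exists (fun φ a => SatFormula a φ) S hsat
  have hpairs : #{p : Formula n k m × Assignment n | SatFormula p.2 p.1 ∧ p.1 ∈ S}
      ≤ #{p : Formula n k m × Assignment n | SatFormula p.2 p.1} :=
    card_le_card (monotone_filter_right _ fun _ _ => And.left)
  have hplantedS := le_mul_of_div_le_of_le (Nat.cast_nonneg _) (Nat.cast_le.2 hpairs) hplanted
  rw [hpsat, div_div_eq_mul_div]
  gcongr
  calc (#S : ℝ) ≤ #{p : Formula n k m × Assignment n | SatFormula p.2 p.1 ∧ p.1 ∈ S} := by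
        exact_mod_cast hS
    _ ≤ pγ * #{p : Formula n k m × Assignment n | SatFormula p.2 p.1} := hplantedS
    _ ≤ pγ * (2 ^ n * Real.exp (-(m : ℝ) / 2 ^ k) * Fintype.card (Formula n k m)) := by
        gcongr
        exact card_satPairs_le n k m
    _ = _ := by ring

/-- Let `p_sat > 0` be the probability that a uniformly random formula with
`m` clauses is satisfiable.  Let `S` be any set of satisfiable formulas with `m` clauses and
`p_γ ∈ [0,1]`.  If, for `(φ,a)` drawn uniformly among pairs of a formula and a satisfying
assignment, `Pr[φ ∈ S] ≤ p_γ`, then for `φ` drawn uniformly among satisfiable formulas,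
`Pr[φ ∈ S] ≤ p_γ·2^n·e^{−m/2^k}/p_sat`. -/
theorem planted_to_satisfiable (n k m : ℕ) (hn : 0 < n) (hk : 0 < k) (hm : 0 < m)
    (psat : ℝ)
    (hpsat : psat = (((univ : Finset (Formula n k m)).filter fun φ =>
        ∃ a : Assignment n, SatFormula a φ).card : ℝ) / (Fintype.card (Formula n k m) : ℝ))
    (hpsat0 : 0 < psat)
    (S : Finset (Formula n k m)) (hsat : ∀ φ ∈ S, ∃ a : Assignment n, SatFormula a φ)
    (pγ : ℝ) (hpγ0 : 0 ≤ pγ) (hpγ1 : pγ ≤ 1)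
    (hplanted :
      ((((univ : Finset (Formula n k m × Assignment n)).filter fun p =>
          SatFormula p.2 p.1 ∧ p.1 ∈ S).card : ℝ)
        / (((univ : Finset (Formula n k m × Assignment n)).filter fun p =>
          SatFormula p.2 p.1).card : ℝ)) ≤ pγ) :
    (S.card : ℝ) / (((univ : Finset (Formula n k m)).filter fun φ =>
        ∃ a : Assignment n, SatFormula a φ).card : ℝ)
      ≤ pγ * 2 ^ n * Real.exp (-(m : ℝ) / 2 ^ k) / psat :=
  planted_to_satisfiable_general n k m psat hpsat S hsat pγ hpγ0 hplanted
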